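/- Let p be an odd prime, let χ₀ be the Legendre character of 𝔽_p (the multiplicative character of order 2), and let χ be any multiplicative character of 𝔽_p with χ ≠ χ₀. Then the ratio of Gauss sums R(χ) := G(χ₀·χ)/G(χ) is not a root of unity. -/

import Mathlib

open Complex Polynomial IntermediateField

noncomputable def gaussSumC (p : ℕ) [NeZero p] (χ : MulChar (ZMod p) ℂ) : ℂ :=
  ∑ x : ZMod p, χ x * Complex.exp (2 * Real.pi * Complex.I * (x.val : ℂ) / p)

namespace GaussAux

lemma pow_mod {z : ℂ} {p : ℕ} (hz : z ^ p = 1) (a : ℕ) : z ^ a = z ^ (a % p) := by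
  conv_lhs => rw [← Nat.div_add_mod a p]
  rw [pow_add, pow_mul, hz, one_pow, one_mul]

lemma gaussSumC_eq (p : ℕ) [NeZero p] (ψ : MulChar (ZMod p) ℂ) :
    gaussSumC p ψ =
      ∑ x : ZMod p, ψ x * Complex.exp (2 * Real.pi * Complex.I / p) ^ x.val := by
  unfold gaussSumC
  refine Finset.sum_congr rfl fun x _ => ?_
  rw [← Complex.exp_nat_mul]
  congr 1
  ring_nf

lemma zp_pow_p (p : ℕ) [NeZero p] :
    Complex.exp (2 * Real.pi * Complex.I / p) ^ p = 1 := by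
  rw [← Complex.exp_nat_mul]
  have hp : (p : ℂ) ≠ 0 := Nat.cast_ne_zero.mpr (NeZero.ne p)
  rw [show (p : ℂ) * (2 * Real.pi * Complex.I / p) = 2 * Real.pi * Complex.I by
    field_simp]
  exact Complex.exp_two_pi_mul_I

lemma reindex (p : ℕ) [Fact p.Prime] (ψ : MulChar (ZMod p) ℂ) {t : ZMod p} (ht : t ≠ 0) :
    ψ t * (∑ x : ZMod p, ψ x * Complex.exp (2 * Real.pi * Complex.I / p) ^ (t * x).val)
      = ∑ x : ZMod p, ψ x * Complex.exp (2 * Real.pi * Complex.I / p) ^ x.val := by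
  set ζp := Complex.exp (2 * Real.pi * Complex.I / p)
  rw [Finset.mul_sum]
  have := Equiv.sum_comp (Equiv.mulLeft₀ t ht)
    (fun y : ZMod p => ψ y * ζp ^ y.val)
  rw [← this]
  refine Finset.sum_congr rfl fun x _ => ?_
  simp only [Equiv.mulLeft₀_apply]
  rw [map_mul, mul_assoc]

end GaussAux

set_option maxHeartbeats 2000000 in
/-- **Lemma A.4.** Let `p` be an odd prime, `χ₀` the Legendre character of `𝔽_p`
and `χ ≠ χ₀` any multiplicative character of `𝔽_p`. Then the ratio of Gauss sums
`R(χ) := G(χ₀·χ)/G(χ)` is not a root of unity. -/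
theorem gaussSum_ratio_not_rootOfUnity
    (p : ℕ) [Fact p.Prime] (hodd : p ≠ 2)
    (χ : MulChar (ZMod p) ℂ)
    (hχ : χ ≠ (quadraticChar (ZMod p)).ringHomComp (Int.castRingHom ℂ)) :
    ¬ ∃ n : ℕ, 0 < n ∧
      (gaussSumC p ((quadraticChar (ZMod p)).ringHomComp (Int.castRingHom ℂ) * χ) /
        gaussSumC p χ) ^ n = 1 := by
  rintro ⟨n, hn, hRn⟩
  have hp : p.Prime := Fact.out
  have hp3 : 3 ≤ p := hp.two_le.lt_of_ne (Ne.symm hodd)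
  set χ₀ : MulChar (ZMod p) ℂ := (quadraticChar (ZMod p)).ringHomComp (Int.castRingHom ℂ)
    with hχ₀def
  set Gχ := gaussSumC p χ with hGχdef
  set Gψ := gaussSumC p (χ₀ * χ) with hGψdef
  set R := Gψ / Gχ with hRdef
  have hR0 : R ≠ 0 := by
    intro h
    rw [h, zero_pow hn.ne'] at hRn
    exact zero_ne_one hRn
  have hGχ0 : Gχ ≠ 0 := by
    intro h
    exact hR0 (by rw [hRdef, h, div_zero])
  have hEq : Gψ = R * Gχ := (div_mul_cancel₀ _ hGχ0).symm
  -- the quadratic nonresidue t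
  obtain ⟨t, ht⟩ := quadraticChar_exists_neg_one (F := ZMod p)
    (by rw [ZMod.ringChar_zmod_n]; exact hodd)
  have ht0 : t ≠ 0 := by
    intro h
    rw [h, quadraticChar_zero] at ht
    norm_num at ht
  have hχ₀t : χ₀ t = -1 := by
    rw [hχ₀def, MulChar.ringHomComp_apply, ht]
    norm_num
  -- the modulus L
  set L := Nat.lcm n (p * (p - 1)) with hLdef
  have hL0 : 0 < L := Nat.pos_of_ne_zero (Nat.lcm_ne_zero hn.ne'
    (Nat.mul_ne_zero (by omega) (by omega)))
  haveI : NeZero L := ⟨hL0.ne'⟩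
  have hnL : n ∣ L := Nat.dvd_lcm_left _ _
  have hpL : p ∣ L := dvd_trans (Dvd.intro _ rfl) (Nat.dvd_lcm_right _ _)
  have hp1L : (p - 1) ∣ L := dvd_trans (Dvd.intro_left _ rfl) (Nat.dvd_lcm_right _ _)
  -- p-part and prime-to-p part of L
  set e := L.factorization p with hedef
  set pe := p ^ e with hpedef
  set m := L / pe with hmdef
  have hpem : pe * m = L := Nat.ordProj_mul_ordCompl_eq_self L p
  have he1 : 1 ≤ e := hp.factorization_pos_of_dvd hL0.ne' hpL
  have hppe : p ∣ pe := dvd_pow_self p (by omega)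
  have hpm : Nat.Coprime p m := Nat.coprime_ordCompl hp hL0.ne'
  have hp1p : Nat.Coprime (p - 1) p := by
    refine ((hp.coprime_iff_not_dvd).mpr ?_).symm
    intro hdvd
    have := Nat.le_of_dvd (by omega) hdvd
    omega
  have hp1m : (p - 1) ∣ m := by
    have hcop : Nat.Coprime (p - 1) pe := hp1p.pow_right e
    exact hcop.dvd_of_dvd_mul_left (by rw [hpem]; exact hp1L)
  -- construct c by CRT
  have hcoppem : Nat.Coprime pe m := (hpm.pow_left e)
  set c : ℕ := (Nat.chineseRemainder hcoppem t.val 1 : ℕ) with hcdef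
  have hc_pe : c ≡ t.val [MOD pe] := (Nat.chineseRemainder hcoppem t.val 1).2.1
  have hc_m : c ≡ 1 [MOD m] := (Nat.chineseRemainder hcoppem t.val 1).2.2
  have htval0 : 0 < t.val := by
    rcases Nat.eq_zero_or_pos t.val with h | h
    · exact absurd (by rwa [← ZMod.val_eq_zero]) ht0
    · exact h
  have htvalp : t.val < p := ZMod.val_lt t
  have hppe' : p ≤ pe := Nat.le_of_dvd (Nat.pow_pos hp.pos) hppe
  have hc1 : 1 ≤ c := by
    rcases Nat.eq_zero_or_pos c with h | h
    · exfalso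
      have : t.val % pe = 0 % pe := (hc_pe.symm.trans (by rw [h])).symm ▸ rfl
      rw [h] at hc_pe
      have h2 := hc_pe.symm
      unfold Nat.ModEq at h2
      rw [Nat.mod_eq_of_lt (by omega), Nat.zero_mod] at h2
      omega
    · exact h
  have hc_p : c ≡ t.val [MOD p] := hc_pe.of_dvd hppe
  have hpc : ¬ p ∣ c := by
    intro hdvd
    have h1 : c % p = 0 := Nat.mod_eq_zero_of_dvd hdvd
    have h2 := hc_p
    unfold Nat.ModEq at h2
    rw [Nat.mod_eq_of_lt htvalp] at h2
    omega
  have hmc1 : m ∣ c - 1 := (Nat.modEq_iff_dvd' hc1).mp hc_m.symm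
  have hp1c1 : (p - 1) ∣ c - 1 := hp1m.trans hmc1
  have hcL : Nat.Coprime c L := by
    rw [← hpem]
    refine Nat.Coprime.mul_right ?_ ?_
    · exact (hp.coprime_iff_not_dvd.mpr hpc).symm.pow_right e
    · have : Nat.gcd c m ∣ 1 := by
        have h1 : Nat.gcd c m ∣ c := Nat.gcd_dvd_left _ _
        have h2 : Nat.gcd c m ∣ c - 1 := dvd_trans (Nat.gcd_dvd_right _ _) hmc1
        have := Nat.dvd_sub h1 h2
        rwa [Nat.sub_sub_self hc1] at this
      exact Nat.eq_one_of_dvd_one this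
  -- cyclotomic field and embedding
  set ζ : ℂ := Complex.exp (2 * Real.pi * Complex.I / L) with hζdef
  have hζ : IsPrimitiveRoot ζ L := Complex.isPrimitiveRoot_exp L hL0.ne'
  have hint : IsIntegral ℚ ζ := (hζ.isIntegral hL0).tower_top
  have hζc : IsPrimitiveRoot (ζ ^ c) L := hζ.pow_of_coprime c hcL
  have hroot : (ζ ^ c) ∈ (minpoly ℚ ζ).aroots ℂ := by
    rw [← cyclotomic_eq_minpoly_rat hζ hL0, Polynomial.mem_aroots]
    refine ⟨Polynomial.cyclotomic_ne_zero L ℚ, ?_⟩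
    have h := hζc.isRoot_cyclotomic hL0
    rw [Polynomial.IsRoot.def] at h
    rw [Polynomial.aeval_def, Polynomial.eval₂_eq_eval_map, Polynomial.map_cyclotomic]
    exact h
  set τ : ℚ⟮ζ⟯ →ₐ[ℚ] ℂ :=
    (IntermediateField.algHomAdjoinIntegralEquiv ℚ hint).symm ⟨ζ ^ c, hroot⟩ with hτdef
  have hτgen : τ (IntermediateField.AdjoinSimple.gen ℚ ζ) = ζ ^ c :=
    IntermediateField.algHomAdjoinIntegralEquiv_symm_apply_gen ℚ hint ⟨ζ ^ c, hroot⟩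
  have key : ∀ z : ℂ, (z = 0 ∨ z ^ L = 1) → ∃ w : ℚ⟮ζ⟯, (w : ℂ) = z ∧ τ w = z ^ c := by
    rintro z (rfl | hz)
    · exact ⟨0, by simp, by rw [map_zero, zero_pow (by omega)]⟩
    · obtain ⟨k, -, hk⟩ := hζ.eq_pow_of_pow_eq_one hz
      refine ⟨IntermediateField.AdjoinSimple.gen ℚ ζ ^ k, ?_, ?_⟩
      · push_cast
        rw [IntermediateField.AdjoinSimple.coe_gen, hk]
      · rw [map_pow, hτgen, ← hk, ← pow_mul, ← pow_mul, mul_comm]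
  -- ζp facts
  set ζp : ℂ := Complex.exp (2 * Real.pi * Complex.I / p) with hζpdef
  have hζpp : ζp ^ p = 1 := GaussAux.zp_pow_p p
  have hζpL : ζp ^ L = 1 := by
    obtain ⟨k, hk⟩ := hpL
    rw [hk, pow_mul, hζpp, one_pow]
  have hpow1 : ∀ (ψ : MulChar (ZMod p) ℂ) (x : ZMod p), IsUnit x → ψ x ^ (p - 1) = 1 := by
    intro ψ x hx
    rw [← map_pow, ZMod.pow_card_sub_one_eq_one hx.ne_zero, map_one]
  have hchiL : ∀ (ψ : MulChar (ZMod p) ℂ) (x : ZMod p), ψ x = 0 ∨ (ψ x) ^ L = 1 := by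
    intro ψ x
    by_cases hx : IsUnit x
    · right
      obtain ⟨k, hk⟩ := hp1L
      rw [hk, pow_mul, hpow1 ψ x hx, one_pow]
    · exact Or.inl (ψ.map_nonunit hx)
  have hchic : ∀ (ψ : MulChar (ZMod p) ℂ) (x : ZMod p), (ψ x) ^ c = ψ x := by
    intro ψ x
    by_cases hx : IsUnit x
    · calc ψ x ^ c = ψ x ^ (c - 1) * ψ x := by
            rw [← pow_succ, show c - 1 + 1 = c by omega]
        _ = ψ x := by
            obtain ⟨k, hk⟩ := hp1c1
            rw [hk, pow_mul, hpow1 ψ x hx, one_pow, one_mul]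
    · rw [ψ.map_nonunit hx, zero_pow (by omega)]
  -- image of Gauss sums under τ
  have hτG : ∀ ψ : MulChar (ZMod p) ℂ, ∃ w : ℚ⟮ζ⟯, (w : ℂ) = gaussSumC p ψ ∧
      τ w = ∑ x : ZMod p, ψ x * ζp ^ (t * x).val := by
    intro ψ
    have hsummand : ∀ x : ZMod p,
        (ψ x * ζp ^ x.val = 0 ∨ (ψ x * ζp ^ x.val) ^ L = 1) := by
      intro x
      rcases hchiL ψ x with h | h
      · exact Or.inl (by rw [h, zero_mul])
      · refine Or.inr ?_
        rw [mul_pow, h, one_mul, ← pow_mul, mul_comm x.val L, pow_mul, hζpL, one_pow]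
    choose w hw1 hw2 using fun x : ZMod p => key _ (hsummand x)
    refine ⟨∑ x, w x, ?_, ?_⟩
    · push_cast
      rw [GaussAux.gaussSumC_eq]
      exact Finset.sum_congr rfl fun x _ => hw1 x
    · rw [map_sum]
      refine Finset.sum_congr rfl fun x _ => ?_
      rw [hw2, mul_pow, hchic]
      congr 1
      rw [← pow_mul, GaussAux.pow_mod hζpp (x.val * c), GaussAux.pow_mod hζpp ((t * x).val)]
      congr 1
      have h1 : (t * x).val = (t.val * x.val) % p := ZMod.val_mul t x
      have h2 : c * x.val ≡ t.val * x.val [MOD p] := hc_p.mul_right x.val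
      unfold Nat.ModEq at h2
      rw [h1, Nat.mod_mod_of_dvd _ (dvd_refl p), mul_comm x.val c]
      exact h2
  obtain ⟨wχ, hwχ1, hwχ2⟩ := hτG χ
  obtain ⟨wψ, hwψ1, hwψ2⟩ := hτG (χ₀ * χ)
  have hRL : R ^ L = 1 := by
    obtain ⟨k, hk⟩ := hnL
    rw [hk, pow_mul, hRn, one_pow]
  obtain ⟨wR, hwR1, hwR2⟩ := key R (Or.inr hRL)
  have hKeq : wR * wχ = wψ := by
    apply Subtype.coe_injective
    push_cast
    rw [hwR1, hwχ1, hwψ1, ← hGχdef, ← hGψdef, hEq]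
  have hτeq : R ^ c * (∑ x : ZMod p, χ x * ζp ^ (t * x).val)
      = ∑ x : ZMod p, (χ₀ * χ) x * ζp ^ (t * x).val := by
    rw [← hwR2, ← hwχ2, ← hwψ2, ← map_mul, hKeq]
  have hre : ∀ ψ' : MulChar (ZMod p) ℂ,
      ψ' t * (∑ x : ZMod p, ψ' x * ζp ^ (t * x).val) = gaussSumC p ψ' := by
    intro ψ'
    rw [GaussAux.gaussSumC_eq]
    exact GaussAux.reindex p ψ' ht0
  have hSχ := hre χ
  have hSψ := hre (χ₀ * χ)
  rw [MulChar.mul_apply, ← hGψdef, hEq] at hSψ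
  have hfinal : (-1 : ℂ) * R ^ c * Gχ = R * Gχ := by
    calc (-1 : ℂ) * R ^ c * Gχ
        = χ₀ t * R ^ c * (χ t * (∑ x : ZMod p, χ x * ζp ^ (t * x).val)) := by
          rw [hSχ, hχ₀t]
      _ = χ₀ t * χ t * (R ^ c * (∑ x : ZMod p, χ x * ζp ^ (t * x).val)) := by ring
      _ = χ₀ t * χ t * (∑ x : ZMod p, (χ₀ * χ) x * ζp ^ (t * x).val) := by rw [hτeq]
      _ = R * Gχ := hSψ
  have hRc : R ^ c = -R := by
    have := mul_right_cancel₀ hGχ0 hfinal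
    linear_combination -this
  have hRc1 : R ^ (c - 1) = -1 := by
    apply mul_right_cancel₀ hR0
    rw [← pow_succ, show c - 1 + 1 = c by omega, hRc]
    ring
  obtain ⟨k, hk⟩ := hmc1
  have h5 : ((-1 : ℂ)) ^ pe = 1 := by
    rw [← hRc1, ← pow_mul, hk, show m * k * pe = L * k by rw [← hpem]; ring,
      pow_mul, hRL, one_pow]
  have hpe_odd : Odd pe := (hp.odd_of_ne_two hodd).pow
  rw [hpe_odd.neg_one_pow] at h5
  norm_num at h5
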